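/- Every positively homogeneous continuous function f : ℝⁿ → ℝ is the pointwise limit of differences g_n − h_n where g_n, h_n are convex positively homogeneous continuous functions; equivalently, f is a uniform-on-compacts limit of differences of support functions of compact convex sets. -/
import Mathlib

open scoped RealInnerProductSpace
open Filter

noncomputable def suppFn {n : ℕ} (D : Set (EuclideanSpace ℝ (Fin n)))
    (x : EuclideanSpace ℝ (Fin n)) : ℝ :=
  sSup ((fun l => ⟪l, x⟫) '' D)

section Aux
variable {n : ℕ}
local notation "E" => EuclideanSpace ℝ (Fin n)


lemma suppFn_exists_max {D : Set (E)} (hne : D.Nonempty) (hc : IsCompact D) (x : E) :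
    ∃ l ∈ D, (∀ m ∈ D, ⟪m, x⟫ ≤ ⟪l, x⟫) ∧ suppFn D x = ⟪l, x⟫ := by
  have hcont : Continuous fun l : E => ⟪l, x⟫ := continuous_id.inner continuous_const
  obtain ⟨l, hl, hmax⟩ := hc.exists_isMaxOn hne hcont.continuousOn
  refine ⟨l, hl, hmax, ?_⟩
  refine IsGreatest.csSup_eq ⟨⟨l, hl, rfl⟩, ?_⟩
  rintro y ⟨m, hm, rfl⟩
  exact hmax hm

lemma le_suppFn {D : Set (E)} (hc : IsCompact D) {l : E} (hl : l ∈ D) (x : E) :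
    ⟪l, x⟫ ≤ suppFn D x := by
  have hcont : Continuous fun l : E => ⟪l, x⟫ := continuous_id.inner continuous_const
  exact le_csSup ((hc.image hcont).bddAbove) ⟨l, hl, rfl⟩

lemma suppFn_le {D : Set (E)} (hne : D.Nonempty) {x : E} {c : ℝ}
    (h : ∀ l ∈ D, ⟪l, x⟫ ≤ c) : suppFn D x ≤ c := by
  apply csSup_le (hne.image _)
  rintro y ⟨m, hm, rfl⟩; exact h m hm


open Pointwise in
lemma suppFn_add_set {A B : Set (E)} (hA : A.Nonempty) (hcA : IsCompact A)
    (hB : B.Nonempty) (hcB : IsCompact B) (x : E) :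
    suppFn (A + B) x = suppFn A x + suppFn B x := by
  obtain ⟨a, ha, _, heqa⟩ := suppFn_exists_max hA hcA x
  obtain ⟨b, hb, _, heqb⟩ := suppFn_exists_max hB hcB x
  apply le_antisymm
  · apply suppFn_le (hA.add hB)
    rintro l ⟨a', ha', b', hb', rfl⟩
    rw [inner_add_left]
    exact add_le_add (le_suppFn hcA ha' x) (le_suppFn hcB hb' x)
  · rw [heqa, heqb, ← inner_add_left]
    exact le_suppFn (hcA.add hcB) (Set.add_mem_add ha hb) x

lemma isCompact_convexJoin {A B : Set (E)} (hcA : IsCompact A) (hcB : IsCompact B) :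
    IsCompact (convexJoin ℝ A B) := by
  have : convexJoin ℝ A B =
      (fun p : ℝ × E × E => (1 - p.1) • p.2.1 + p.1 • p.2.2) ''
        (Set.Icc (0:ℝ) 1 ×ˢ A ×ˢ B) := by
    ext z
    simp only [convexJoin, Set.mem_iUnion, Set.mem_image, Set.mem_prod, Prod.exists]
    constructor
    · rintro ⟨a, ha, b, hb, hz⟩
      rw [segment_eq_image] at hz
      obtain ⟨t, ht, rfl⟩ := hz
      exact ⟨t, a, b, ⟨ht, ha, hb⟩, rfl⟩
    · rintro ⟨t, a, b, ⟨ht, ha, hb⟩, rfl⟩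
      refine ⟨a, ha, b, hb, ?_⟩
      rw [segment_eq_image]
      exact ⟨t, ht, rfl⟩
  rw [this]
  exact ((isCompact_Icc.prod (hcA.prod hcB)).image (by fun_prop))

lemma suppFn_convexJoin {A B : Set (E)} (hA : A.Nonempty) (hcA : IsCompact A)
    (hB : B.Nonempty) (hcB : IsCompact B) (x : E) :
    suppFn (convexJoin ℝ A B) x = max (suppFn A x) (suppFn B x) := by
  have hsub : A ∪ B ⊆ convexJoin ℝ A B := by
    rintro l (hl | hl)
    · obtain ⟨b, hb⟩ := hB
      exact segment_subset_convexJoin hl hb (left_mem_segment ℝ l b)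
    · obtain ⟨a, ha⟩ := hA
      exact segment_subset_convexJoin ha hl (right_mem_segment ℝ a l)
  have hcJ : IsCompact (convexJoin ℝ A B) := isCompact_convexJoin hcA hcB
  apply le_antisymm
  · apply suppFn_le (hA.mono (fun l hl => hsub (Set.mem_union_left _ hl)))
    intro l hl
    rw [mem_convexJoin] at hl
    obtain ⟨a, ha, b, hb, hl⟩ := hl
    obtain ⟨s, t, hs, ht, hst, rfl⟩ := hl
    calc ⟪s • a + t • b, x⟫ = s * ⟪a, x⟫ + t * ⟪b, x⟫ := by
          rw [inner_add_left, real_inner_smul_left, real_inner_smul_left]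
      _ ≤ s * max (suppFn A x) (suppFn B x) + t * max (suppFn A x) (suppFn B x) := by
          gcongr
          · exact (le_suppFn hcA ha x).trans (le_max_left _ _)
          · exact (le_suppFn hcB hb x).trans (le_max_right _ _)
      _ = max (suppFn A x) (suppFn B x) := by rw [← add_mul, hst, one_mul]
  · apply max_le
    · exact suppFn_le hA fun l hl => le_suppFn hcJ (hsub (Set.mem_union_left _ hl)) x
    · exact suppFn_le hB fun l hl => le_suppFn hcJ (hsub (Set.mem_union_right _ hl)) x


lemma suppFn_smul {D : Set (E)} (hne : D.Nonempty) (hc : IsCompact D) {α : ℝ}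
    (hα : 0 < α) (x : E) : suppFn D (α • x) = α * suppFn D x := by
  obtain ⟨l, hl, hmax, heq⟩ := suppFn_exists_max hne hc x
  obtain ⟨m, hm, hmax', heq'⟩ := suppFn_exists_max hne hc (α • x)
  rw [heq, heq']
  apply le_antisymm
  · rw [real_inner_smul_right]
    exact mul_le_mul_of_nonneg_left (hmax m hm) hα.le
  · have := hmax' l hl
    rw [real_inner_smul_right] at this
    rw [real_inner_smul_right] at this ⊢
    exact this

lemma suppFn_zero {D : Set (E)} (hne : D.Nonempty) (hc : IsCompact D) :
    suppFn D 0 = 0 := by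
  obtain ⟨l, hl, _, heq⟩ := suppFn_exists_max hne hc 0
  rw [heq, inner_zero_right]

lemma suppFn_singleton (l x : E) : suppFn {l} x = ⟪l, x⟫ := by
  simp [suppFn]

lemma suppFn_closedBall {r : ℝ} (hr : 0 ≤ r) (x : E) :
    suppFn (Metric.closedBall (0 : E) r) x = r * ‖x‖ := by
  have hne : (Metric.closedBall (0 : E) r).Nonempty := ⟨0, by simp [hr]⟩
  have hc : IsCompact (Metric.closedBall (0 : E) r) := isCompact_closedBall _ _
  apply le_antisymm
  · apply suppFn_le hne
    intro l hl
    rw [Metric.mem_closedBall, dist_zero_right] at hl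
    calc ⟪l, x⟫ ≤ ‖l‖ * ‖x‖ := real_inner_le_norm l x
      _ ≤ r * ‖x‖ := mul_le_mul_of_nonneg_right hl (norm_nonneg x)
  · rcases eq_or_ne x 0 with rfl | hx
    · simp [suppFn_zero hne hc]
    · have hx0 : (0:ℝ) < ‖x‖ := norm_pos_iff.2 hx
      have hmem : (r * ‖x‖⁻¹) • x ∈ Metric.closedBall (0 : E) r := by
        rw [Metric.mem_closedBall, dist_zero_right, norm_smul, Real.norm_eq_abs,
          abs_of_nonneg (mul_nonneg hr (inv_nonneg.2 hx0.le)), mul_assoc,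
          inv_mul_cancel₀ hx0.ne', mul_one]
      have h2 := le_suppFn hc hmem x
      rw [real_inner_smul_left, real_inner_self_eq_norm_sq] at h2
      calc r * ‖x‖ = r * ‖x‖⁻¹ * ‖x‖ ^ 2 := by field_simp
        _ ≤ _ := h2

lemma suppFn_continuous {D : Set (E)} (hne : D.Nonempty) (hc : IsCompact D) :
    Continuous (suppFn D) := by
  obtain ⟨M, hM⟩ : ∃ M : ℝ, ∀ l ∈ D, ‖l‖ ≤ M := by
    obtain ⟨M, hM⟩ := hc.isBounded.subset_closedBall 0
    exact ⟨M, fun l hl => by simpa [dist_zero_right] using hM hl⟩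
  have key : ∀ x y : E, suppFn D x ≤ suppFn D y + M * ‖x - y‖ := by
    intro x y
    obtain ⟨l, hl, _, heq⟩ := suppFn_exists_max hne hc x
    rw [heq]
    calc ⟪l, x⟫ = ⟪l, y⟫ + ⟪l, x - y⟫ := by rw [← inner_add_right, add_sub_cancel]
      _ ≤ suppFn D y + M * ‖x - y‖ := by
          gcongr
          · exact le_suppFn hc hl y
          · calc ⟪l, x - y⟫ ≤ ‖l‖ * ‖x - y‖ := real_inner_le_norm _ _
              _ ≤ M * ‖x - y‖ := mul_le_mul_of_nonneg_right (hM l hl) (norm_nonneg _)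
  have hM0 : 0 ≤ M := by
    obtain ⟨l, hl⟩ := hne
    exact (norm_nonneg l).trans (hM l hl)
  apply (lipschitzWith_iff_dist_le_mul (K := Real.toNNReal M)).2 ?_ |>.continuous
  intro x y
  rw [Real.dist_eq, Real.coe_toNNReal _ hM0, dist_eq_norm]
  rw [abs_sub_le_iff]
  constructor
  · linarith [key x y]
  · have := key y x
    rw [norm_sub_rev] at this
    linarith

lemma suppFn_convexOn {D : Set (E)} (hne : D.Nonempty) (hc : IsCompact D) :
    ConvexOn ℝ Set.univ (suppFn D) := by
  refine ⟨convex_univ, fun x _ y _ a b ha hb hab => ?_⟩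
  obtain ⟨l, hl, _, heq⟩ := suppFn_exists_max hne hc (a • x + b • y)
  rw [heq, inner_add_right, real_inner_smul_right, real_inner_smul_right]
  simp only [smul_eq_mul]
  gcongr
  · exact le_suppFn hc hl x
  · exact le_suppFn hc hl y


/-- The "good set" property. -/
def GoodSet (G : Set (E)) : Prop := G.Nonempty ∧ IsCompact G ∧ Convex ℝ G

open Pointwise

lemma dense_step (f : E → ℝ) (hf : Continuous f) {ε : ℝ} (hε : 0 < ε) :
    ∃ G H : Set (E), GoodSet G ∧ GoodSet H ∧
      ∀ u ∈ Metric.sphere (0 : E) 1, |suppFn G u - suppFn H u - f u| ≤ ε := by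
  set S := Metric.sphere (0 : E) 1 with hS
  set L : Set C(S, ℝ) :=
    {φ | ∃ G H : Set (E), GoodSet G ∧ GoodSet H ∧
      ∀ u : S, φ u = suppFn G u - suppFn H u} with hL
  -- affine functions are in L
  have affine_mem : ∀ (l : E) (c : ℝ),
      (⟨fun u : S => ⟪l, (u : E)⟫ + c,
        ((continuous_const.inner continuous_subtype_val).add continuous_const)⟩ : C(S, ℝ)) ∈ L := by
    intro l c
    refine ⟨{l} + Metric.closedBall 0 (max c 0), Metric.closedBall 0 (max (-c) 0),
      ⟨?_, ?_, ?_⟩, ⟨?_, ?_, ?_⟩, ?_⟩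
    · exact (Set.singleton_nonempty l).add ⟨0, by simp [le_max_right]⟩
    · exact (isCompact_singleton).add (isCompact_closedBall _ _)
    · exact (convex_singleton l).add (convex_closedBall _ _)
    · exact ⟨0, by simp [le_max_right]⟩
    · exact isCompact_closedBall _ _
    · exact convex_closedBall _ _
    · intro u
      have hu : ‖(u : E)‖ = 1 := by
        have := u.2
        simpa [hS, dist_zero_right] using this
      have h1 : suppFn ({l} + Metric.closedBall (0:E) (max c 0)) u
          = ⟪l, (u:E)⟫ + max c 0 := by
        rw [suppFn_add_set (Set.singleton_nonempty l) isCompact_singleton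
          ⟨0, by simp [le_max_right]⟩ (isCompact_closedBall _ _),
          suppFn_singleton, suppFn_closedBall (le_max_right _ _), hu, mul_one]
      have h2 : suppFn (Metric.closedBall (0:E) (max (-c) 0)) u = max (-c) 0 := by
        rw [suppFn_closedBall (le_max_right _ _), hu, mul_one]
      simp only [ContinuousMap.coe_mk, h1, h2]
      rcases le_total c 0 with h | h
      · rw [max_eq_right h, max_eq_left (by linarith)]; ring
      · rw [max_eq_left h, max_eq_right (by linarith)]; ring
  have hclosure : closure L = ⊤ := by
    apply ContinuousMap.sublattice_closure_eq_top
    · -- nonempty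
      refine ⟨_, affine_mem 0 0⟩
    · -- inf_mem
      rintro φ ⟨Gφ, Hφ, hGφ, hHφ, hφ⟩ ψ ⟨Gψ, Hψ, hGψ, hHψ, hψ⟩
      refine ⟨Gφ + Gψ, convexJoin ℝ (Gψ + Hφ) (Gφ + Hψ), ?_, ?_, ?_⟩
      · exact ⟨hGφ.1.add hGψ.1, hGφ.2.1.add hGψ.2.1, hGφ.2.2.add hGψ.2.2⟩
      · refine ⟨?_, isCompact_convexJoin (hGψ.2.1.add hHφ.2.1) (hGφ.2.1.add hHψ.2.1), 
          (hGψ.2.2.add hHφ.2.2).convexJoin (hGφ.2.2.add hHψ.2.2)⟩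
        obtain ⟨a, ha⟩ := hGψ.1.add hHφ.1
        obtain ⟨b, hb⟩ := hGφ.1.add hHψ.1
        exact ⟨a, segment_subset_convexJoin ha hb (left_mem_segment ℝ a b)⟩
      · intro u
        have := suppFn_convexJoin (hGψ.1.add hHφ.1) (hGψ.2.1.add hHφ.2.1)
          (hGφ.1.add hHψ.1) (hGφ.2.1.add hHψ.2.1) (u : E)
        rw [ContinuousMap.inf_apply, hφ u, hψ u,
          suppFn_add_set hGφ.1 hGφ.2.1 hGψ.1 hGψ.2.1, this,
          suppFn_add_set hGψ.1 hGψ.2.1 hHφ.1 hHφ.2.1,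
          suppFn_add_set hGφ.1 hGφ.2.1 hHψ.1 hHψ.2.1]
        rcases le_total (suppFn Gφ (u:E) - suppFn Hφ (u:E))
          (suppFn Gψ (u:E) - suppFn Hψ (u:E)) with h | h
        · rw [min_eq_left h, max_eq_left (by linarith)]; ring
        · rw [min_eq_right h, max_eq_right (by linarith)]; ring
    · -- sup_mem
      rintro φ ⟨Gφ, Hφ, hGφ, hHφ, hφ⟩ ψ ⟨Gψ, Hψ, hGψ, hHψ, hψ⟩
      refine ⟨convexJoin ℝ (Gφ + Hψ) (Gψ + Hφ), Hφ + Hψ, ?_, ?_, ?_⟩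
      · refine ⟨?_, isCompact_convexJoin (hGφ.2.1.add hHψ.2.1) (hGψ.2.1.add hHφ.2.1),
          (hGφ.2.2.add hHψ.2.2).convexJoin (hGψ.2.2.add hHφ.2.2)⟩
        obtain ⟨a, ha⟩ := hGφ.1.add hHψ.1
        obtain ⟨b, hb⟩ := hGψ.1.add hHφ.1
        exact ⟨a, segment_subset_convexJoin ha hb (left_mem_segment ℝ a b)⟩
      · exact ⟨hHφ.1.add hHψ.1, hHφ.2.1.add hHψ.2.1, hHφ.2.2.add hHψ.2.2⟩
      · intro u
        have := suppFn_convexJoin (hGφ.1.add hHψ.1) (hGφ.2.1.add hHψ.2.1)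
          (hGψ.1.add hHφ.1) (hGψ.2.1.add hHφ.2.1) (u : E)
        rw [ContinuousMap.sup_apply, hφ u, hψ u, this,
          suppFn_add_set hHφ.1 hHφ.2.1 hHψ.1 hHψ.2.1,
          suppFn_add_set hGφ.1 hGφ.2.1 hHψ.1 hHψ.2.1,
          suppFn_add_set hGψ.1 hGψ.2.1 hHφ.1 hHφ.2.1]
        rcases le_total (suppFn Gφ (u:E) - suppFn Hφ (u:E))
          (suppFn Gψ (u:E) - suppFn Hψ (u:E)) with h | h
        · rw [max_eq_right h, max_eq_right (by linarith)]; ring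
        · rw [max_eq_left h, max_eq_left (by linarith)]; ring
    · -- separates points strongly
      intro v x y
      by_cases hxy : x = y
      · subst hxy
        exact ⟨_, affine_mem 0 (v x), by simp, by simp⟩
      · have hne : (x : E) - (y : E) ≠ 0 := by
          intro h
          exact hxy (Subtype.ext (by rwa [sub_eq_zero] at h))
        have hd : (0:ℝ) < ‖(x : E) - (y : E)‖ ^ 2 := by
          have : (0:ℝ) < ‖(x : E) - (y : E)‖ := norm_pos_iff.2 hne
          positivity
        set c := (v x - v y) / ‖(x : E) - y‖ ^ 2 with hc
        set l := c • ((x : E) - y) with hl2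
        have hlx : ⟪l, (x:E)⟫ - ⟪l, (y:E)⟫ = v x - v y := by
          rw [hl2, real_inner_smul_left, real_inner_smul_left, ← mul_sub,
            ← inner_sub_right, real_inner_self_eq_norm_sq, hc]
          field_simp
        refine ⟨_, affine_mem l (v x - ⟪l, (x:E)⟫), ?_, ?_⟩
        · simp
        · show ⟪l, (y:E)⟫ + (v x - ⟪l, (x:E)⟫) = v y
          linarith
  -- extract approximation
  set fS : C(S, ℝ) := ⟨fun u => f u, hf.comp continuous_subtype_val⟩ with hfS
  have hmem : fS ∈ closure L := by rw [hclosure]; trivial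
  rw [Metric.mem_closure_iff] at hmem
  obtain ⟨φ, hφL, hdist⟩ := hmem (ε) hε
  obtain ⟨G, H, hG, hH, hrep⟩ := hφL
  refine ⟨G, H, hG, hH, fun u hu => ?_⟩
  have := ContinuousMap.dist_apply_le_dist (f := fS) (g := φ) ⟨u, hu⟩
  rw [Real.dist_eq] at this
  have h2 := hrep ⟨u, hu⟩
  simp only [hfS, ContinuousMap.coe_mk] at this h2
  rw [h2] at this
  rw [abs_sub_comm]
  exact this.trans hdist.le

lemma global_est {G H : Set (E)} (hG : GoodSet G) (hH : GoodSet H)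
    {f : E → ℝ} (hhom : ∀ α : ℝ, 0 < α → ∀ x, f (α • x) = α * f x) {ε : ℝ}
    (hb : ∀ u ∈ Metric.sphere (0 : E) 1, |suppFn G u - suppFn H u - f u| ≤ ε)
    (x : E) : |suppFn G x - suppFn H x - f x| ≤ ε * ‖x‖ := by
  have hf0 : f 0 = 0 := by
    have := hhom 2 two_pos 0
    rw [smul_zero] at this
    linarith
  rcases eq_or_ne x 0 with rfl | hx
  · rw [suppFn_zero hG.1 hG.2.1, suppFn_zero hH.1 hH.2.1, hf0]
    simp
  · have hx0 : (0:ℝ) < ‖x‖ := norm_pos_iff.2 hx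
    set u : E := ‖x‖⁻¹ • x with hu
    have hus : u ∈ Metric.sphere (0 : E) 1 := by
      rw [Metric.mem_sphere, dist_zero_right, hu, norm_smul, Real.norm_eq_abs,
        abs_of_nonneg (inv_nonneg.2 hx0.le), inv_mul_cancel₀ hx0.ne']
    have hxu : x = ‖x‖ • u := by
      rw [hu, smul_smul, mul_inv_cancel₀ hx0.ne', one_smul]
    have e1 : suppFn G x = ‖x‖ * suppFn G u := by
      conv_lhs => rw [hxu]
      exact suppFn_smul hG.1 hG.2.1 hx0 u
    have e2 : suppFn H x = ‖x‖ * suppFn H u := by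
      conv_lhs => rw [hxu]
      exact suppFn_smul hH.1 hH.2.1 hx0 u
    have e3 : f x = ‖x‖ * f u := by
      conv_lhs => rw [hxu]
      exact hhom _ hx0 u
    rw [e1, e2, e3]
    calc |‖x‖ * suppFn G u - ‖x‖ * suppFn H u - ‖x‖ * f u|
        = ‖x‖ * |suppFn G u - suppFn H u - f u| := by
          rw [← mul_sub, ← mul_sub, abs_mul, abs_of_nonneg hx0.le]
      _ ≤ ‖x‖ * ε := mul_le_mul_of_nonneg_left (hb u hus) hx0.le
      _ = ε * ‖x‖ := mul_comm _ _

end Aux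

/-- Every positively homogeneous continuous `f : ℝⁿ → ℝ` is a pointwise limit of
differences `gₙ − hₙ` of convex, positively homogeneous, continuous functions;
equivalently a uniform-on-compacts limit of differences of support functions of
compact convex sets. -/
theorem posHomog_limit_of_diff_support {n : ℕ}
    (f : EuclideanSpace ℝ (Fin n) → ℝ) (hf : Continuous f)
    (hhom : ∀ α : ℝ, 0 < α → ∀ x, f (α • x) = α * f x) :
    (∃ g h : ℕ → EuclideanSpace ℝ (Fin n) → ℝ,
      (∀ k, Continuous (g k) ∧ ConvexOn ℝ Set.univ (g k) ∧
        ∀ α : ℝ, 0 < α → ∀ x, g k (α • x) = α * g k x) ∧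
      (∀ k, Continuous (h k) ∧ ConvexOn ℝ Set.univ (h k) ∧
        ∀ α : ℝ, 0 < α → ∀ x, h k (α • x) = α * h k x) ∧
      ∀ x, Tendsto (fun k => g k x - h k x) atTop (nhds (f x))) ∧
    (∃ G H : ℕ → Set (EuclideanSpace ℝ (Fin n)),
      (∀ k, (G k).Nonempty ∧ IsCompact (G k) ∧ Convex ℝ (G k)) ∧
      (∀ k, (H k).Nonempty ∧ IsCompact (H k) ∧ Convex ℝ (H k)) ∧
      ∀ K : Set (EuclideanSpace ℝ (Fin n)), IsCompact K →
        TendstoUniformlyOn (fun k x => suppFn (G k) x - suppFn (H k) x) f atTop K) := by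
  have hstep : ∀ k : ℕ, ∃ G H : Set (EuclideanSpace ℝ (Fin n)), GoodSet G ∧ GoodSet H ∧
      ∀ u ∈ Metric.sphere (0 : EuclideanSpace ℝ (Fin n)) 1,
        |suppFn G u - suppFn H u - f u| ≤ 1 / (k + 1) := by
    intro k
    exact dense_step f hf (by positivity)
  choose G H hG hH hb using hstep
  have hest : ∀ k x, |suppFn (G k) x - suppFn (H k) x - f x| ≤ (1 / (k + 1)) * ‖x‖ :=
    fun k x => global_est (hG k) (hH k) hhom (hb k) x
  have hlim : Tendsto (fun k : ℕ => 1 / ((k : ℝ) + 1)) atTop (nhds 0) :=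
    tendsto_one_div_add_atTop_nhds_zero_nat
  constructor
  · refine ⟨fun k => suppFn (G k), fun k => suppFn (H k), ?_, ?_, ?_⟩
    · exact fun k => ⟨suppFn_continuous (hG k).1 (hG k).2.1,
        suppFn_convexOn (hG k).1 (hG k).2.1,
        fun α hα x => suppFn_smul (hG k).1 (hG k).2.1 hα x⟩
    · exact fun k => ⟨suppFn_continuous (hH k).1 (hH k).2.1,
        suppFn_convexOn (hH k).1 (hH k).2.1,
        fun α hα x => suppFn_smul (hH k).1 (hH k).2.1 hα x⟩
    · intro x
      rw [tendsto_iff_dist_tendsto_zero]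
      apply squeeze_zero (fun k => dist_nonneg)
        (g := fun k : ℕ => (1 / ((k : ℝ) + 1)) * ‖x‖)
      · intro k
        rw [Real.dist_eq]
        exact hest k x
      · simpa using hlim.mul_const ‖x‖
  · refine ⟨G, H, hG, hH, ?_⟩
    intro K hK
    rw [Metric.tendstoUniformlyOn_iff]
    intro ε hε
    obtain ⟨R, hR⟩ := hK.isBounded.subset_closedBall 0
    have hev : ∀ᶠ k : ℕ in atTop, (1 / ((k : ℝ) + 1)) * (|R| + 1) < ε := by
      have : Tendsto (fun k : ℕ => (1 / ((k : ℝ) + 1)) * (|R| + 1)) atTop (nhds 0) := by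
        simpa using hlim.mul_const (|R| + 1)
      exact this.eventually_lt_const hε
    filter_upwards [hev] with k hk x hx
    rw [Real.dist_eq]
    have h1 : ‖x‖ ≤ |R| + 1 := by
      have := hR hx
      rw [Metric.mem_closedBall, dist_zero_right] at this
      calc ‖x‖ ≤ R := this
        _ ≤ |R| := le_abs_self R
        _ ≤ |R| + 1 := by linarith
    calc |f x - (suppFn (G k) x - suppFn (H k) x)|
        = |suppFn (G k) x - suppFn (H k) x - f x| := abs_sub_comm _ _
      _ ≤ (1 / (k + 1)) * ‖x‖ := hest k x
      _ ≤ (1 / (k + 1)) * (|R| + 1) := by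
          apply mul_le_mul_of_nonneg_left h1 (by positivity)
      _ < ε := hk
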